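/- Let (Ω, F, P) be a probability space and G ⊆ F a sub-σ-algebra. Fix r ≥ 1, a finite index set I, real weights (w_j)_{j∈I}, and finitely many time indices t ∈ T. Suppose that for each t ∈ T there are G-measurable random vectors u_t : Ω → ℝ^r and v_n, v_j : Ω → ℝ^r (j ∈ I), and integrable real random variables ε_{tn}, ε_{tj} with E[ε_{tn} | G] = 0 and E[ε_{tj} | G] = 0 almost surely. Define Y_{tn} = ⟨u_t, v_n⟩ + ε_{tn} and Y_{tj} = ⟨u_t, v_j⟩ + ε_{tj}, and assume all these random variables are integrable. If v_n = Σ_{j∈I} w_j v_j almost surely, then almost surely: (i) for every t ∈ T, E[Y_{tn} | G] = Σ_{j∈I} w_j E[Y_{tj} | G]; and (ii) (1/|T|) Σ_{t∈T} E[Y_{tn} | G] = (1/|T|) Σ_{t∈T} Σ_{j∈I} w_j E[Y_{tj} | G]. -/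

import Mathlib

open MeasureTheory ProbabilityTheory
open scoped RealInnerProductSpace

/-! Conditioning on `G` keeps the `G`-measurable signal `⟪u t, v⟫` and kills the shock, so
`E[Y_{tn} | G] = ⟪u_t, v_n⟫` and `E[Y_{tj} | G] = ⟪u_t, v_j⟫` almost surely; linearity of the
inner product in `v_n = ∑ j, w j • v j` then gives (i), and averaging (i) over `t` gives (ii). -/

section SignalPlusNoise

variable {α E : Type*} [NormedAddCommGroup E] [NormedSpace ℝ E] [CompleteSpace E]
  {m m₀ : MeasurableSpace α} {μ : Measure α} {f g : α → E}

theorem condExp_add_ae_eq_of_condExp_ae_eq_zero (hm : m ≤ m₀) [SigmaFinite (μ.trim hm)]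
    (hf : StronglyMeasurable[m] f) (hfg : Integrable (f + g) μ) (hg : Integrable g μ)
    (hg0 : μ[g|m] =ᵐ[μ] 0) : μ[f + g|m] =ᵐ[μ] f := by
  have hfi : Integrable f μ := by simpa using hfg.sub hg
  calc μ[f + g|m] =ᵐ[μ] μ[f|m] + μ[g|m] := condExp_add hfi hg m
    _ = f + μ[g|m] := by rw [condExp_of_stronglyMeasurable hm hf hfi]
    _ =ᵐ[μ] f + 0 := hg0.add_left
    _ = f := add_zero f

end SignalPlusNoise

theorem synthetic_interventions_identification_general
    {Ω : Type*} {F : MeasurableSpace Ω} {P : Measure Ω} [IsProbabilityMeasure P]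
    {G : MeasurableSpace Ω} (hG : G ≤ F)
    {r : ℕ}
    {ι : Type*} [Fintype ι] (w : ι → ℝ)
    {τ : Type*} [Fintype τ]
    (u : τ → Ω → EuclideanSpace ℝ (Fin r))
    (vn : Ω → EuclideanSpace ℝ (Fin r)) (v : ι → Ω → EuclideanSpace ℝ (Fin r))
    (hu : ∀ t, StronglyMeasurable[G] (u t))
    (hvn : StronglyMeasurable[G] vn) (hv : ∀ j, StronglyMeasurable[G] (v j))
    (εn : τ → Ω → ℝ) (ε : τ → ι → Ω → ℝ)
    (hεn_int : ∀ t, Integrable (εn t) P) (hε_int : ∀ t j, Integrable (ε t j) P)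
    (hεn : ∀ t, P[εn t|G] =ᵐ[P] 0)
    (hε : ∀ t j, P[ε t j|G] =ᵐ[P] 0)
    (Yn : τ → Ω → ℝ) (Y : τ → ι → Ω → ℝ)
    (hYn : ∀ t ω, Yn t ω = ⟪u t ω, vn ω⟫ + εn t ω)
    (hY : ∀ t j ω, Y t j ω = ⟪u t ω, v j ω⟫ + ε t j ω)
    (hYn_int : ∀ t, Integrable (Yn t) P) (hY_int : ∀ t j, Integrable (Y t j) P)
    (hspan : ∀ᵐ ω ∂P, vn ω = ∑ j, w j • v j ω) :
    (∀ t, P[Yn t|G] =ᵐ[P] fun ω => ∑ j, w j * (P[Y t j|G]) ω) ∧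
      ((fun ω => (Fintype.card τ : ℝ)⁻¹ * ∑ t, (P[Yn t|G]) ω)
        =ᵐ[P] fun ω => (Fintype.card τ : ℝ)⁻¹ * ∑ t, ∑ j, w j * (P[Y t j|G]) ω) := by
  have htarget (t : τ) : P[Yn t|G] =ᵐ[P] fun ω => ⟪u t ω, vn ω⟫ := by
    have hsplit : Yn t = (fun ω => ⟪u t ω, vn ω⟫) + εn t := funext (hYn t)
    rw [hsplit]
    exact condExp_add_ae_eq_of_condExp_ae_eq_zero hG ((hu t).inner hvn)
      (hsplit ▸ hYn_int t) (hεn_int t) (hεn t)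
  have hdonors (t : τ) : ∀ᵐ ω ∂P, ∀ j, P[Y t j|G] ω = ⟪u t ω, v j ω⟫ := by
    refine ae_all_iff.2 fun j => ?_
    have hsplit : Y t j = (fun ω => ⟪u t ω, v j ω⟫) + ε t j := funext (hY t j)
    rw [hsplit]
    exact condExp_add_ae_eq_of_condExp_ae_eq_zero hG ((hu t).inner (hv j))
      (hsplit ▸ hY_int t j) (hε_int t j) (hε t j)
  have hperiod (t : τ) : P[Yn t|G] =ᵐ[P] fun ω => ∑ j, w j * (P[Y t j|G]) ω := by
    filter_upwards [htarget t, hdonors t, hspan] with ω hYn hY hvn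
    simp only [hYn, hY, hvn, inner_sum, real_inner_smul_right]
  refine ⟨hperiod, ?_⟩
  filter_upwards [ae_all_iff.2 hperiod] with ω h
  simp only [h]

/-- **Identification theorem of the synthetic interventions framework.**
Under the latent factor model `Y = ⟨u, v⟩ + ε` with shocks having zero conditional
mean given the sub-σ-algebra `G` of latent factors, and the linear span inclusion
`v_n = ∑ j, w j • v j`, the conditional expectation of the target unit's outcome is
identified, at every time `t`, by the `w`-weighted combination of the donors'
conditional expectations, and hence so is the average over the post-intervention
times. -/
theorem synthetic_interventions_identification
    {Ω : Type*} {F : MeasurableSpace Ω} {P : Measure Ω} [IsProbabilityMeasure P]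
    {G : MeasurableSpace Ω} (hG : G ≤ F)
    {r : ℕ} (hr : 1 ≤ r)
    {ι : Type*} [Fintype ι] (w : ι → ℝ)
    {τ : Type*} [Fintype τ] [Nonempty τ]
    (u : τ → Ω → EuclideanSpace ℝ (Fin r))
    (vn : Ω → EuclideanSpace ℝ (Fin r)) (v : ι → Ω → EuclideanSpace ℝ (Fin r))
    (hu : ∀ t, StronglyMeasurable[G] (u t))
    (hvn : StronglyMeasurable[G] vn) (hv : ∀ j, StronglyMeasurable[G] (v j))
    (εn : τ → Ω → ℝ) (ε : τ → ι → Ω → ℝ)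
    (hεn_int : ∀ t, Integrable (εn t) P) (hε_int : ∀ t j, Integrable (ε t j) P)
    (hεn : ∀ t, P[εn t|G] =ᵐ[P] 0)
    (hε : ∀ t j, P[ε t j|G] =ᵐ[P] 0)
    (Yn : τ → Ω → ℝ) (Y : τ → ι → Ω → ℝ)
    (hYn : ∀ t ω, Yn t ω = ⟪u t ω, vn ω⟫ + εn t ω)
    (hY : ∀ t j ω, Y t j ω = ⟪u t ω, v j ω⟫ + ε t j ω)
    (hYn_int : ∀ t, Integrable (Yn t) P) (hY_int : ∀ t j, Integrable (Y t j) P)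
    (hspan : ∀ᵐ ω ∂P, vn ω = ∑ j, w j • v j ω) :
    (∀ t, P[Yn t|G] =ᵐ[P] fun ω => ∑ j, w j * (P[Y t j|G]) ω) ∧
      ((fun ω => (Fintype.card τ : ℝ)⁻¹ * ∑ t, (P[Yn t|G]) ω)
        =ᵐ[P] fun ω => (Fintype.card τ : ℝ)⁻¹ * ∑ t, ∑ j, w j * (P[Y t j|G]) ω) :=
  synthetic_interventions_identification_general hG w u vn v hu hvn hv εn ε hεn_int hε_int hεn hε Yn
    Y hYn hY hYn_int hY_int hspan
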